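/- Supermartingale Rule with constant probability and decrease (adapted from McIver–Morgan–Kaminski–Katoen): Let (M_n)_{n∈ℕ} be an adapted, integrable real-valued process on a filtered probability space with M_n ≥ 0 P-almost surely for every n, and let T be a stopping time. Suppose there are constants p ∈ (0,1] and d > 0 such that for every n ∈ ℕ, P-almost everywhere on the event {T > n}: (i) M_n > 0; (ii) P(M_{n+1} − M_n ≤ −d | ℱ_n) ≥ p; and (iii) E(M_{n+1} | ℱ_n) ≤ M_n. Then P(T < ∞) = 1 (almost sure termination). -/

import Mathlib

open MeasureTheory Filter
open scoped Topology

/-!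
Stopped at `T`, the process `M` becomes a nonnegative supermartingale, so it converges almost
surely. On `{T = ∞}` the stopped process is `M` itself, and there the conditional probabilities
of a decrease by `d` are all at least `p`, so they sum to infinity; by Lévy's conditional
Borel–Cantelli lemma such decreases then happen infinitely often, which is incompatible with
convergence. Hence `{T = ∞}` is a null set.
-/

theorem Filter.Tendsto.eventually_neg_lt_sub {x : ℕ → ℝ} {c d : ℝ}
    (hx : Tendsto x atTop (𝓝 c)) (hd : 0 < d) : ∀ᶠ n in atTop, -d < x (n + 1) - x n := by
  have h : Tendsto (fun n => x (n + 1) - x n) atTop (𝓝 0) := by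
    simpa using (hx.comp (tendsto_add_atTop_nat 1)).sub hx
  exact h.eventually_const_lt (neg_neg_of_pos hd)

namespace MeasureTheory

variable {Ω : Type*} {mΩ : MeasurableSpace Ω} {P : Measure Ω} {ℱ : Filtration ℕ mΩ}

lemma stoppedProcess_add_one {β : Type*} [AddCommGroup β] (u : ℕ → Ω → β) (τ : Ω → ℕ∞)
    (n : ℕ) :
    stoppedProcess u τ (n + 1) =
      stoppedProcess u τ n + {ω | (n : ℕ∞) < τ ω}.indicator (u (n + 1) - u n) := by
  ext ω
  by_cases h : (n : ℕ∞) < τ ω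
  · have h' : ((n + 1 : ℕ) : ℕ∞) ≤ τ ω := Order.add_one_le_of_lt h
    simp [h, stoppedProcess_eq_of_le h.le, stoppedProcess_eq_of_le h']
  · have h' : τ ω ≤ n := not_lt.1 h
    have h'' : τ ω ≤ ((n + 1 : ℕ) : ℕ∞) := h'.trans (by simp)
    simp [h, stoppedProcess_eq_of_ge h', stoppedProcess_eq_of_ge h'']

theorem supermartingale_stoppedProcess_of_condExp_le [IsFiniteMeasure P] {M : ℕ → Ω → ℝ}
    {T : Ω → ℕ∞} (hM : StronglyAdapted ℱ M) (hint : ∀ n, Integrable (M n) P)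
    (hT : IsStoppingTime ℱ T)
    (hSM : ∀ n : ℕ, ∀ᵐ ω ∂P, (n : ℕ∞) < T ω → P[M (n + 1)|ℱ n] ω ≤ M n ω) :
    Supermartingale (stoppedProcess M T) ℱ P := by
  refine supermartingale_of_condExp_sub_nonneg_nat (hM.stoppedProcess_of_discrete hT)
    (integrable_stoppedProcess hT hint) fun n => ?_
  have hdiff : stoppedProcess M T n - stoppedProcess M T (n + 1) =
      {ω | (n : ℕ∞) < T ω}.indicator (M n - M (n + 1)) := by
    rw [stoppedProcess_add_one, sub_add_cancel_left, ← Set.indicator_neg', neg_sub]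
  have hM_n : P[M n|ℱ n] = M n := condExp_of_stronglyMeasurable (ℱ.le n) (hM n) (hint n)
  have hG : MeasurableSet[ℱ n] {ω | (n : ℕ∞) < T ω} := hT.measurableSet_gt n
  filter_upwards [condExp_indicator ((hint n).sub (hint (n + 1))) hG,
    condExp_sub (m := ℱ n) (hint n) (hint (n + 1)), hSM n] with ω h_ind h_sub h_le
  rw [Pi.zero_apply, hdiff, h_ind]
  by_cases hω : (n : ℕ∞) < T ω
  · simpa [hω, h_sub, hM_n] using h_le hω
  · simp [hω]

theorem Supermartingale.exists_ae_tendsto_of_nonneg [IsFiniteMeasure P] {f : ℕ → Ω → ℝ}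
    (hf : Supermartingale f ℱ P) (hnn : ∀ n, 0 ≤ᵐ[P] f n) :
    ∀ᵐ ω ∂P, ∃ c, Tendsto (fun n => f n ω) atTop (𝓝 c) := by
  have hbdd : ∀ n, eLpNorm ((-f) n) 1 P ≤ (∫ ω, f 0 ω ∂P).toNNReal := by
    intro n
    have hle : ∫ ω, f n ω ∂P ≤ ∫ ω, f 0 ω ∂P := by
      simpa using hf.setIntegral_le (Nat.zero_le n) MeasurableSet.univ
    rw [Pi.neg_apply, eLpNorm_neg, eLpNorm_one_eq_lintegral_enorm,
      ← ofReal_integral_norm_eq_lintegral_enorm (hf.integrable n)]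
    refine ENNReal.ofReal_le_ofReal (le_of_eq_of_le (integral_congr_ae ?_) hle)
    filter_upwards [hnn n] with ω hω using Real.norm_of_nonneg hω
  filter_upwards [hf.neg.exists_ae_tendsto_of_bdd hbdd] with ω ⟨c, hc⟩
  exact ⟨-c, by simpa using hc.neg⟩

theorem ae_frequently_mem_of_le_condExp_indicator [IsFiniteMeasure P] {s : ℕ → Set Ω}
    (hs : ∀ n, MeasurableSet[ℱ (n + 1)] (s n)) {p : ℝ} (hp : 0 < p) :
    ∀ᵐ ω ∂P, (∀ n, p ≤ P[(s n).indicator (1 : Ω → ℝ)|ℱ n] ω) → ∃ᶠ n in atTop, ω ∈ s n := by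
  -- Lévy's Borel–Cantelli lemma pairs `s' (k + 1)` with `ℱ k`, so shift `s` by one.
  let s' : ℕ → Set Ω := fun | 0 => ∅ | n + 1 => s n
  have hs' : ∀ n, MeasurableSet[ℱ n] (s' n)
    | 0 => @MeasurableSet.empty _ (ℱ 0)
    | n + 1 => hs n
  filter_upwards [ae_mem_limsup_atTop_iff P hs'] with ω hω hp_le
  have hsum : Tendsto (fun n => ∑ k ∈ Finset.range n, P[(s k).indicator (1 : Ω → ℝ)|ℱ k] ω)
      atTop atTop := by
    refine tendsto_atTop_mono (fun n => ?_) (tendsto_natCast_atTop_atTop.atTop_mul_const hp)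
    simpa using Finset.sum_le_sum (s := Finset.range n) fun k _ => hp_le k
  have hlim := hω.2 hsum
  rwa [← limsup_nat_add s' 1, mem_limsup_iff_frequently_mem] at hlim

end MeasureTheory

theorem supermartingale_rule_general
    {Ω : Type*} {mΩ : MeasurableSpace Ω} {P : Measure Ω} [IsProbabilityMeasure P]
    (ℱ : Filtration ℕ mΩ) (M : ℕ → Ω → ℝ) (T : Ω → ℕ∞)
    (hAdapted : Adapted ℱ M) (hInt : ∀ n, Integrable (M n) P)
    (hNonneg : ∀ n : ℕ, ∀ᵐ ω ∂P, 0 ≤ M n ω)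
    (hStop : ∀ n : ℕ, MeasurableSet[ℱ n] {ω | T ω ≤ (n : ℕ∞)})
    (p d : ℝ) (hp0 : 0 < p) (hd : 0 < d)
    (hDec : ∀ n : ℕ, ∀ᵐ ω ∂P, (n : ℕ∞) < T ω →
      p ≤ (P[Set.indicator {ω' | M (n + 1) ω' - M n ω' ≤ -d} (fun _ => (1 : ℝ))|ℱ n]) ω)
    (hSM : ∀ n : ℕ, ∀ᵐ ω ∂P, (n : ℕ∞) < T ω → (P[M (n + 1)|ℱ n]) ω ≤ M n ω) :
    P {ω | T ω < ⊤} = 1 := by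
  have hT : IsStoppingTime ℱ T := hStop
  have hconv := (supermartingale_stoppedProcess_of_condExp_le hAdapted.stronglyAdapted hInt hT
    hSM).exists_ae_tendsto_of_nonneg fun n => by
      filter_upwards [ae_all_iff.2 hNonneg] with ω hω using hω _
  have hD : ∀ n, MeasurableSet[ℱ (n + 1)] {ω | M (n + 1) ω - M n ω ≤ -d} := fun n =>
    measurableSet_le ((hAdapted (n + 1)).sub ((hAdapted n).mono (ℱ.mono n.le_succ) le_rfl))
      measurable_const
  have h_top : ∀ᵐ ω ∂P, T ω < ⊤ := by
    filter_upwards [hconv, ae_frequently_mem_of_le_condExp_indicator hD hp0,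
      ae_all_iff.2 hDec] with ω ⟨c, hc⟩ hfreq hDecω
    refine lt_top_iff_ne_top.2 fun hω => ?_
    have hlt : ∀ n : ℕ, (n : ℕ∞) < T ω := fun n => hω ▸ ENat.natCast_lt_top n
    have hM : Tendsto (fun n => M n ω) atTop (𝓝 c) := by
      simpa only [stoppedProcess_eq_of_le (hlt _).le] using hc
    exact hfreq (fun n => hDecω n (hlt n)) ((hM.eventually_neg_lt_sub hd).mono fun n => not_le.2)
  have hmeas : MeasurableSet {ω | T ω < ⊤} := hT.measurable' measurableSet_Iio
  exact (prob_compl_eq_zero_iff hmeas).1 (ae_iff.1 h_top)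

/-- **Supermartingale Rule with constant probability and decrease.** If `(M n)` is an
adapted integrable nonnegative process, `T` a stopping time, and there are constants
`p ∈ (0,1]` and `d > 0` such that on `{T > n}` the process is positive, decreases by at
least `d` with conditional probability at least `p`, and is a supermartingale, then
`P(T < ∞) = 1` (almost sure termination). -/
theorem supermartingale_rule
    {Ω : Type*} {mΩ : MeasurableSpace Ω} {P : Measure Ω} [IsProbabilityMeasure P]
    (ℱ : Filtration ℕ mΩ) (M : ℕ → Ω → ℝ) (T : Ω → ℕ∞)
    (hAdapted : Adapted ℱ M) (hInt : ∀ n, Integrable (M n) P)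
    (hNonneg : ∀ n : ℕ, ∀ᵐ ω ∂P, 0 ≤ M n ω)
    (hStop : ∀ n : ℕ, MeasurableSet[ℱ n] {ω | T ω ≤ (n : ℕ∞)})
    (p d : ℝ) (hp0 : 0 < p) (hp1 : p ≤ 1) (hd : 0 < d)
    (hPos : ∀ n : ℕ, ∀ᵐ ω ∂P, (n : ℕ∞) < T ω → 0 < M n ω)
    (hDec : ∀ n : ℕ, ∀ᵐ ω ∂P, (n : ℕ∞) < T ω →
      p ≤ (P[Set.indicator {ω' | M (n + 1) ω' - M n ω' ≤ -d} (fun _ => (1 : ℝ))|ℱ n]) ω)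
    (hSM : ∀ n : ℕ, ∀ᵐ ω ∂P, (n : ℕ∞) < T ω → (P[M (n + 1)|ℱ n]) ω ≤ M n ω) :
    P {ω | T ω < ⊤} = 1 :=
  supermartingale_rule_general ℱ M T hAdapted hInt hNonneg hStop p d hp0 hd hDec hSM
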